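/- The affine transformation Δŭ = Δu·exp(−(lF/(2√(βρ)))x) + (A/(2√(βρ)))(p_out + (F/A)δ(xl)χ), Δv̆ = Δv·exp((lF/(2√(βρ)))x) − (A/(2√(βρ)))(p_out + (F/A)δ(xl)χ) maps classical solutions of the linearised system Δŭ_t = −εΔŭ_x − (f|q_in|/(2DA))(Δŭ + Δv̆ − δ'(xl)χ), Δv̆_t = εΔv̆_x − (f|q_in|/(2DA))(Δŭ + Δv̆ − δ'(xl)χ) into the target cascade form Δu_t = −εΔu_x + c₁(x)Δv, Δv_t = εΔv_x + c₂(x)Δu with c₁(x) = −(F/(2ρ))exp((lF/√(βρ))x) and c₂(x) = −(F/(2ρ))exp(−(lF/√(βρ))x), where ε = (1/l)√(β/ρ), F = (fρ/(DA))|q_in| and δ' denotes the derivative of δ, so that the inhomogeneous χ-terms cancel because (d/dx)[δ(xl)] = l·δ'(xl). -/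

import Mathlib

open Real Set

theorem affine_transform_to_cascade
    (l A D β ρ f qin χ pout : ℝ)
    (hl : 0 < l) (hA : 0 < A) (hD : 0 < D) (hβ : 0 < β) (hρ : 0 < ρ)
    (hf : 0 < f) (hqin : qin ≠ 0)
    (δ δ' : ℝ → ℝ) (hδ : ∀ z ∈ Icc 0 l, HasDerivAt δ (δ' z) z)
    (F ε a : ℝ)
    (hF : F = (f * ρ / (D * A)) * |qin|)
    (hε : ε = (1/l) * Real.sqrt (β / ρ))
    (ha : a = l * F / (2 * Real.sqrt (β * ρ)))
    (K : ℝ → ℝ)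
    (hK : ∀ x, K x = (A / (2 * Real.sqrt (β * ρ))) * (pout + (F / A) * δ (x*l) * χ))
    (U V Ut Ux Vt Vx : ℝ → ℝ → ℝ)
    (hUt : ∀ x ∈ Icc (0:ℝ) 1, ∀ t ≥ (0:ℝ), HasDerivAt (fun τ => U x τ) (Ut x t) t)
    (hUx : ∀ x ∈ Icc (0:ℝ) 1, ∀ t ≥ (0:ℝ), HasDerivAt (fun ξ => U ξ t) (Ux x t) x)
    (hVt : ∀ x ∈ Icc (0:ℝ) 1, ∀ t ≥ (0:ℝ), HasDerivAt (fun τ => V x τ) (Vt x t) t)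
    (hVx : ∀ x ∈ Icc (0:ℝ) 1, ∀ t ≥ (0:ℝ), HasDerivAt (fun ξ => V ξ t) (Vx x t) x)
    (hPDE1 : ∀ x ∈ Icc (0:ℝ) 1, ∀ t ≥ (0:ℝ),
      Ut x t = -ε * Ux x t - (f * |qin| / (2*D*A)) * (U x t + V x t - δ' (x*l) * χ))
    (hPDE2 : ∀ x ∈ Icc (0:ℝ) 1, ∀ t ≥ (0:ℝ),
      Vt x t = ε * Vx x t - (f * |qin| / (2*D*A)) * (U x t + V x t - δ' (x*l) * χ))
    (Δu Δv : ℝ → ℝ → ℝ)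
    (hΔu : ∀ x t, Δu x t = (U x t - K x) * Real.exp (a * x))
    (hΔv : ∀ x t, Δv x t = (V x t + K x) * Real.exp (-(a * x)))
    (c₁ c₂ : ℝ → ℝ)
    (hc₁ : ∀ x, c₁ x = -(F / (2*ρ)) * Real.exp (l * F / Real.sqrt (β * ρ) * x))
    (hc₂ : ∀ x, c₂ x = -(F / (2*ρ)) * Real.exp (-(l * F / Real.sqrt (β * ρ) * x))) :
    ∀ x ∈ Ioo (0:ℝ) 1, ∀ t > (0:ℝ), ∃ ux vx : ℝ,
      HasDerivAt (fun ξ => Δu ξ t) ux x ∧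
      HasDerivAt (fun ξ => Δv ξ t) vx x ∧
      HasDerivAt (fun τ => Δu x τ) (-ε * ux + c₁ x * Δv x t) t ∧
      HasDerivAt (fun τ => Δv x τ) (ε * vx + c₂ x * Δu x t) t := by
  intro x hx t ht
  have hx' : x ∈ Icc (0:ℝ) 1 := Ioo_subset_Icc_self hx
  have ht' : t ≥ (0:ℝ) := le_of_lt ht
  set s : ℝ := Real.sqrt (β * ρ) with hs
  have hspos : (0:ℝ) < s := Real.sqrt_pos.2 (by positivity)
  have hssq : s * s = β * ρ := Real.mul_self_sqrt (by positivity)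
  -- √(β/ρ) = s / ρ
  have hsqrtdiv : Real.sqrt (β / ρ) = s / ρ := by
    rw [hs, show β / ρ = (β * ρ) / ρ ^ 2 by field_simp,
      Real.sqrt_div (by positivity) (ρ ^ 2), Real.sqrt_sq hρ.le]
  -- key scalar identities
  have key1 : f * |qin| / (2 * D * A) = F / (2 * ρ) := by
    rw [hF]; field_simp
  have key2 : ε * a = F / (2 * ρ) := by
    rw [hε, ha, hsqrtdiv]
    field_simp
  -- derivative of K
  have hxl : x * l ∈ Icc (0:ℝ) l := by
    constructor
    · nlinarith [hx'.1, hx'.2]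
    · nlinarith [hx'.1, hx'.2]
  have hδx : HasDerivAt (fun ξ : ℝ => δ (ξ * l)) (δ' (x * l) * l) x := by
    have h := (hδ (x * l) hxl).comp x ((hasDerivAt_id x).mul_const l)
    simpa [Function.comp_def] using h
  set K' : ℝ := (A / (2 * s)) * ((F / A) * (δ' (x * l) * l) * χ) with hK'def
  have hKd : HasDerivAt K K' x := by
    have h1 : HasDerivAt (fun ξ : ℝ => (A / (2 * s)) * (pout + (F / A) * δ (ξ * l) * χ)) K' x := by
      exact (((hδx.const_mul (F / A)).mul_const χ).const_add pout).const_mul _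
    have : K = fun ξ : ℝ => (A / (2 * s)) * (pout + (F / A) * δ (ξ * l) * χ) := funext hK
    rw [this]; exact h1
  have key3 : ε * K' = F / (2 * ρ) * (δ' (x * l) * χ) := by
    rw [hK'def, hε, hsqrtdiv]
    field_simp
  -- exp facts
  have h2a : l * F / s = a + a := by
    rw [ha]; field_simp; ring
  have hexp2a : Real.exp (l * F / s * x) = Real.exp (a * x) * Real.exp (a * x) := by
    rw [← Real.exp_add]
    congr 1
    rw [h2a]; ring
  -- spatial derivative of exp factors
  have hExpP : HasDerivAt (fun ξ : ℝ => Real.exp (a * ξ)) (a * Real.exp (a * x)) x := by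
    have h := (Real.hasDerivAt_exp (a * x)).comp x ((hasDerivAt_id x).const_mul a)
    simpa [mul_comm, Function.comp_def] using h
  have hExpM : HasDerivAt (fun ξ : ℝ => Real.exp (-(a * ξ))) (-a * Real.exp (-(a * x))) x := by
    have h := (Real.hasDerivAt_exp (-(a * x))).comp x (((hasDerivAt_id x).const_mul a).neg)
    simpa [mul_comm, Function.comp_def] using h
  -- spatial derivatives of Δu, Δv
  set ux : ℝ := (Ux x t - K') * Real.exp (a * x) + (U x t - K x) * (a * Real.exp (a * x)) with huxd
  set vx : ℝ := (Vx x t + K') * Real.exp (-(a * x)) + (V x t + K x) * (-a * Real.exp (-(a * x))) with hvxd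
  have hDux : HasDerivAt (fun ξ => Δu ξ t) ux x := by
    have h := ((hUx x hx' t ht').sub hKd).mul hExpP
    have he : (fun ξ => Δu ξ t) = fun ξ => (U ξ t - K ξ) * Real.exp (a * ξ) := by
      funext ξ; exact hΔu ξ t
    rw [he]; exact h
  have hDvx : HasDerivAt (fun ξ => Δv ξ t) vx x := by
    have h := ((hVx x hx' t ht').add hKd).mul hExpM
    have he : (fun ξ => Δv ξ t) = fun ξ => (V ξ t + K ξ) * Real.exp (-(a * ξ)) := by
      funext ξ; exact hΔv ξ t
    rw [he]; exact h
  refine ⟨ux, vx, hDux, hDvx, ?_, ?_⟩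
  · have h := ((hUt x hx' t ht').sub_const (K x)).mul_const (Real.exp (a * x))
    have he : (fun τ => Δu x τ) = fun τ => (U x τ - K x) * Real.exp (a * x) := by
      funext τ; exact hΔu x τ
    rw [he]
    refine h.congr_deriv ?_
    symm
    rw [hPDE1 x hx' t ht', key1, hc₁ x, hΔv x t, hexp2a, huxd]
    have e1 : -ε * ((Ux x t - K') * Real.exp (a * x) + (U x t - K x) * (a * Real.exp (a * x)))
        = -ε * Ux x t * Real.exp (a * x) + (ε * K') * Real.exp (a * x)
          - (ε * a) * (U x t - K x) * Real.exp (a * x) := by ring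
    rw [e1, key2, key3]
    have hE : Real.exp (a * x) * Real.exp (-(a * x)) = 1 := by
      rw [← Real.exp_add]; simp
    linear_combination (-(F / (2 * ρ)) * (V x t + K x) * Real.exp (a * x)) * hE
  · have h := ((hVt x hx' t ht').add_const (K x)).mul_const (Real.exp (-(a * x)))
    have he : (fun τ => Δv x τ) = fun τ => (V x τ + K x) * Real.exp (-(a * x)) := by
      funext τ; exact hΔv x τ
    rw [he]
    refine h.congr_deriv ?_
    symm
    rw [hPDE2 x hx' t ht', key1, hc₂ x, hΔu x t, hvxd]
    have e1 : ε * ((Vx x t + K') * Real.exp (-(a * x)) + (V x t + K x) * (-a * Real.exp (-(a * x))))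
        = ε * Vx x t * Real.exp (-(a * x)) + (ε * K') * Real.exp (-(a * x))
          - (ε * a) * (V x t + K x) * Real.exp (-(a * x)) := by ring
    rw [e1, key2, key3]
    have hE2 : Real.exp (-(l * F / Real.sqrt (β * ρ) * x)) * Real.exp (a * x)
        = Real.exp (-(a * x)) := by
      rw [← Real.exp_add]
      congr 1
      rw [h2a]; ring
    linear_combination (-(F / (2 * ρ)) * (U x t - K x)) * hE2
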